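/- Let γ ≥ 1 and define the diagonal operator A on ℓ²(ℕ) (with ℕ = {1,2,3,…}) by (Ax)_k := (k + i k^γ + 1) x_k on the maximal domain D(A) := {x ∈ ℓ² : ((k + i k^γ + 1)x_k)_k ∈ ℓ²}. Then −A generates the C₀-semigroup given by (e^{-tA}x)_k = e^{-(k + i k^γ + 1)t} x_k, which is exponentially stable. Moreover, for every t > 0 one has e^{-tA}(ℓ²) ⊆ D(A) and ‖Ae^{-tA}‖ ≤ √5 · (γ/(e t))^γ, while limsup_{t→0+} t^γ ‖Ae^{-tA}‖ ≥ e^{-1}. Consequently (e^{-tA})_{t≥0} is in the Crandall–Pazy class with parameter β = 1/γ, but not with any parameter larger than 1/γ. -/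

import Mathlib

open Filter Topology

noncomputable section

variable {H : Type*} [NormedAddCommGroup H] [InnerProductSpace ℂ H]

/-- `T` is a strongly continuous one-parameter semigroup on `H` (written `T t = e^{-tA}`). -/
structure IsC0Semigroup (T : ℝ → H →L[ℂ] H) : Prop where
  map_zero : T 0 = 1
  map_add : ∀ s t : ℝ, 0 ≤ s → 0 ≤ t → T (s + t) = T s ∘L T t
  strong_continuity : ∀ x : H, ContinuousOn (fun t : ℝ => T t x) (Set.Ici 0)

/-- `-A` is the generator of the semigroup `T`. -/
def IsGenerator (T : ℝ → H →L[ℂ] H) (A : H →ₗ.[ℂ] H) : Prop :=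
  (∀ x : H, x ∈ A.domain ↔
      ∃ y : H, Tendsto (fun h : ℝ => (h : ℂ)⁻¹ • (T h x - x)) (𝓝[>] 0) (𝓝 y)) ∧
  ∀ x : A.domain,
    Tendsto (fun h : ℝ => (h : ℂ)⁻¹ • (T h (x : H) - (x : H))) (𝓝[>] 0) (𝓝 (-(A x)))

/-- The semigroup `T = (e^{-tA})_{t ≥ 0}` is in the Crandall–Pazy class with parameter `β`. -/
def InCrandallPazy (T : ℝ → H →L[ℂ] H) (A : H →ₗ.[ℂ] H) (β : ℝ) : Prop :=
  ∃ B : ℝ → H →L[ℂ] H,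
    (∀ t : ℝ, 0 < t → ∀ x : H, ∃ hx : T t x ∈ A.domain, B t x = A ⟨T t x, hx⟩) ∧
    ∃ M t₀ : ℝ, 0 < M ∧ 0 < t₀ ∧ ∀ t : ℝ, 0 < t → t ≤ t₀ → ‖B t‖ ≤ M * t ^ (-(1 / β))

/-- The semigroup `T` is exponentially stable. -/
def IsExpStable (T : ℝ → H →L[ℂ] H) : Prop :=
  ∃ K c : ℝ, 0 < K ∧ 0 < c ∧ ∀ t : ℝ, 0 ≤ t → ‖T t‖ ≤ K * Real.exp (-(c * t))

/-- The Hilbert space `ℓ²(ℕ)` (indexing the paper's `k ≥ 1` by `j = k - 1 ∈ ℕ`). -/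
abbrev H2 : Type := lp (fun _ : ℕ => ℂ) 2

/-- The eigenvalue `λ_k + 1 = k + i k^γ + 1` with `k = j + 1`. -/
def lamE (γ : ℝ) (j : ℕ) : ℂ :=
  (((j : ℝ) + 1 : ℝ) : ℂ) + Complex.I * ((((j : ℝ) + 1) ^ γ : ℝ) : ℂ) + 1

/-! Both `e^{-tA}` and `A e^{-tA}` are multiplication operators on `ℓ²`, whose norms are the sup
norms of their multipliers. Strong continuity and the identification of the generator follow from
dominated convergence in `ℓ²`, using `‖e^{-λt} - 1‖ ≤ ‖λ‖ t` for `0 ≤ Re λ`. The multiplier of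
`A e^{-tA}` at `k` has modulus `‖λ_k‖ e^{-(k+1)t} ≤ √5 k^γ e^{-kt} ≤ √5 (γ/(e t))^γ`, and at
`t = 1/k` it is at least `t^{-γ} e^{-1-t}`. So `t^γ ‖A e^{-tA}‖` has limsup at least `e⁻¹` as
`t → 0+`, which excludes a bound `O(t^{-1/β})` with `β > 1/γ`. -/

open scoped ENNReal lp

namespace Complex

theorem norm_exp_sub_one_le_of_re_nonpos {z : ℂ} (hz : z.re ≤ 0) : ‖exp z - 1‖ ≤ ‖z‖ := by
  have hderiv : ∀ s ∈ Set.Icc (0 : ℝ) 1,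
      HasDerivWithinAt (fun s : ℝ => exp (s * z)) (exp (s * z) * z) (Set.Icc 0 1) s := by
    intro s _
    simpa using (((hasDerivAt_id (s : ℂ)).mul_const z).cexp.comp_ofReal).hasDerivWithinAt
  have hbound : ∀ s ∈ Set.Ico (0 : ℝ) 1, ‖exp (s * z) * z‖ ≤ ‖z‖ := by
    intro s hs
    rw [norm_mul, norm_exp, re_ofReal_mul]
    exact mul_le_of_le_one_left (norm_nonneg z)
      (Real.exp_le_one_iff.2 (mul_nonpos_of_nonneg_of_nonpos hs.1 hz))
  simpa using norm_image_sub_le_of_norm_deriv_le_segment_01' hderiv hbound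

theorem norm_exp_neg_mul_le_one {μ : ℂ} (hμ : 0 ≤ μ.re) {t : ℝ} (ht : 0 ≤ t) :
    ‖exp (-μ * t)‖ ≤ 1 := by
  rw [norm_exp]
  exact Real.exp_le_one_iff.2 (by simpa [mul_re] using mul_nonneg hμ ht)

theorem tendsto_slope_exp_neg_mul (μ : ℂ) :
    Tendsto (fun h : ℝ => (h : ℂ)⁻¹ * (exp (-μ * h) - 1)) (𝓝[>] 0) (𝓝 (-μ)) := by
  have hderiv : HasDerivAt (fun h : ℝ => exp (-μ * h)) (-μ) 0 := by
    simpa using ((hasDerivAt_id (0 : ℂ)).const_mul (-μ)).cexp.comp_ofReal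
  simpa [Complex.real_smul] using hderiv.tendsto_slope_zero_right

theorem norm_slope_exp_neg_mul_le {μ : ℂ} (hμ : 0 ≤ μ.re) {h : ℝ} (hh : 0 < h) :
    ‖(h : ℂ)⁻¹ * (exp (-μ * h) - 1)‖ ≤ ‖μ‖ := by
  have hexp : ‖exp (-μ * h) - 1‖ ≤ ‖μ‖ * h := by
    simpa [norm_mul, abs_of_pos hh] using
      norm_exp_sub_one_le_of_re_nonpos (z := -μ * h) (by simpa using mul_nonneg hμ hh.le)
  rw [norm_mul, norm_inv, norm_real, Real.norm_of_nonneg hh.le, inv_mul_le_iff₀ hh]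
  linarith

end Complex

namespace Real

theorem rpow_mul_exp_neg_mul_le {s t γ : ℝ} (hs : 0 ≤ s) (ht : 0 < t) (hγ : 0 < γ) :
    s ^ γ * exp (-(s * t)) ≤ (γ / (exp 1 * t)) ^ γ := by
  set u := s * t / γ
  have hu : 0 ≤ u := by positivity
  have hut : u * γ = s * t := by simp only [u]; field_simp
  have hsplit : s ^ γ * exp (-(s * t)) = (γ / t * (u * exp (-u))) ^ γ := by
    rw [mul_rpow (by positivity) (by positivity), mul_rpow hu (by positivity),
      ← exp_mul, ← mul_assoc, ← mul_rpow (by positivity) hu]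
    congr 3
    · field_simp; linarith [hut]
    · rw [neg_mul, hut]
  calc s ^ γ * exp (-(s * t)) = (γ / t * (u * exp (-u))) ^ γ := hsplit
    _ ≤ (γ / t * exp (-1)) ^ γ := by
      gcongr
      exact mul_exp_neg_le_exp_neg_one u
    _ = (γ / (exp 1 * t)) ^ γ := by
      rw [exp_neg]
      field_simp

end Real

namespace lp

variable {ι : Type*} {p : ℝ≥0∞}

section Multiplication

theorem norm_le_mul_of_forall_norm_apply_le [Fact (1 ≤ p)] {x y : ℓ^p(ι, ℂ)} {C : ℝ}
    (hC : 0 ≤ C) (h : ∀ i, ‖y i‖ ≤ C * ‖x i‖) : ‖y‖ ≤ C * ‖x‖ := by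
  have hp : p ≠ 0 := (zero_lt_one.trans_le Fact.out).ne'
  calc ‖y‖ ≤ ‖(C : ℂ) • x‖ := norm_mono hp fun i => by
        rw [coeFn_smul, Pi.smul_apply, smul_eq_mul, norm_mul, Complex.norm_real,
          Real.norm_of_nonneg hC]
        exact h i
    _ = C * ‖x‖ := by rw [norm_smul, Complex.norm_real, Real.norm_of_nonneg hC]

theorem memℓp_infty_mul (a : ℓ^∞(ι, ℂ)) (x : ℓ^p(ι, ℂ)) : Memℓp (fun i => a i * x i) p :=
  ((lp.memℓp x).norm.const_mul ‖a‖).mono fun i => by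
    rw [norm_mul]
    exact mul_le_mul_of_nonneg_right (norm_apply_le_norm ENNReal.top_ne_zero a i) (norm_nonneg _)

variable [Fact (1 ≤ p)]

def mulCLM (a : ℓ^∞(ι, ℂ)) : ℓ^p(ι, ℂ) →L[ℂ] ℓ^p(ι, ℂ) :=
  LinearMap.mkContinuous
    { toFun := fun x => ⟨fun i => a i * x i, memℓp_infty_mul a x⟩
      map_add' := fun x y => lp.ext <| funext fun i => mul_add (a i) (x i) (y i)
      map_smul' := fun c x => lp.ext <| funext fun i => mul_left_comm (a i) c (x i) }
    ‖a‖ fun x => norm_le_mul_of_forall_norm_apply_le (norm_nonneg a) fun i => by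
      simp only [LinearMap.coe_mk, AddHom.coe_mk, norm_mul]
      exact mul_le_mul_of_nonneg_right (norm_apply_le_norm ENNReal.top_ne_zero a i) (norm_nonneg _)

@[simp]
theorem mulCLM_apply (a : ℓ^∞(ι, ℂ)) (x : ℓ^p(ι, ℂ)) (i : ι) :
    mulCLM a x i = a i * x i := rfl

theorem norm_mulCLM (a : ℓ^∞(ι, ℂ)) : ‖(mulCLM a : ℓ^p(ι, ℂ) →L[ℂ] ℓ^p(ι, ℂ))‖ = ‖a‖ := by
  refine le_antisymm (LinearMap.mkContinuous_norm_le _ (norm_nonneg a) _)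
    (norm_le_of_forall_le (norm_nonneg _) fun i => ?_)
  classical
  have hp : 0 < p := zero_lt_one.trans_le Fact.out
  calc ‖a i‖ = ‖mulCLM a (lp.single p i 1) i‖ := by simp
    _ ≤ ‖mulCLM a (lp.single p i 1)‖ := norm_apply_le_norm hp.ne' _ i
    _ ≤ ‖(mulCLM a : ℓ^p(ι, ℂ) →L[ℂ] ℓ^p(ι, ℂ))‖ := by
      simpa [lp.norm_single hp] using (mulCLM a).le_opNorm (lp.single p i 1)

theorem tendsto_of_dominated {α : Type*} {l : Filter α} (hp : p ≠ ∞) {F : α → ℓ^p(ι, ℂ)}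
    {f : ℓ^p(ι, ℂ)} {g : ι → ℝ} (hg : Memℓp g p) (hbound : ∀ᶠ a in l, ∀ i, ‖F a i - f i‖ ≤ g i)
    (hlim : ∀ i, Tendsto (fun a => F a i) l (𝓝 (f i))) : Tendsto F l (𝓝 f) := by
  have hp' : 0 < p.toReal := ENNReal.toReal_pos (zero_lt_one.trans_le Fact.out).ne' hp
  have hsum : Tendsto (fun a => ∑' i, ‖F a i - f i‖ ^ p.toReal) l (𝓝 (∑' _ : ι, (0 : ℝ))) := by
    refine tendsto_tsum_of_dominated_convergence (hg.summable hp') (fun i => ?_) ?_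
    · simpa [Real.zero_rpow hp'.ne'] using
        (tendsto_iff_norm_sub_tendsto_zero.1 (hlim i)).rpow_const (Or.inr hp'.le)
    · filter_upwards [hbound] with a ha i
      rw [Real.norm_of_nonneg (by positivity)]
      gcongr
      exact (ha i).trans (Real.le_norm_self _)
  rw [tendsto_iff_norm_sub_tendsto_zero]
  have hnorm : ∀ a, ‖F a - f‖ = (∑' i, ‖F a i - f i‖ ^ p.toReal) ^ (1 / p.toReal) := fun a => by
    simp [norm_eq_tsum_rpow hp']
  simpa [hnorm, Real.zero_rpow (inv_pos.2 hp').ne'] using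
    hsum.rpow_const (p := 1 / p.toReal) (Or.inr (by positivity))

end Multiplication

section Diagonal

variable (μ : ι → ℂ)

def diagonal : ℓ^p(ι, ℂ) →ₗ.[ℂ] ℓ^p(ι, ℂ) where
  domain :=
    { carrier := {x | Memℓp (fun i => μ i * x i) p}
      add_mem' {x y} hx hy := by
        show Memℓp _ p
        convert hx.add hy using 1
        funext i
        simp [mul_add]
      zero_mem' := by simpa using zero_mem_ℓp' (E := fun _ : ι => ℂ)
      smul_mem' c x hx := by simpa [mul_left_comm _ c] using hx.const_mul c }
  toFun :=
    { toFun := fun x => ⟨fun i => μ i * (x : ℓ^p(ι, ℂ)) i, x.2⟩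
      map_add' := fun x y => lp.ext <| funext fun i => mul_add (μ i) (x.1 i) (y.1 i)
      map_smul' := fun c x => lp.ext <| funext fun i => mul_left_comm (μ i) c (x.1 i) }

theorem mem_diagonal_domain {x : ℓ^p(ι, ℂ)} :
    x ∈ (diagonal μ).domain ↔ Memℓp (fun i => μ i * x i) p := Iff.rfl

@[simp]
theorem diagonal_apply (x : (diagonal μ).domain) (i : ι) :
    diagonal (p := p) μ x i = μ i * (x : ℓ^p(ι, ℂ)) i := rfl

end Diagonal

section Semigroup

variable {μ : ι → ℂ}

-- Clamped at `t = 0`, so that it is defined (and contractive) for every real `t`.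
def expMultiplier (hμ : ∀ i, 0 ≤ (μ i).re) (t : ℝ) : ℓ^∞(ι, ℂ) :=
  ⟨fun i => Complex.exp (-μ i * (max t 0 : ℝ)),
    memℓp_infty ⟨1, Set.forall_mem_range.2 fun i =>
      Complex.norm_exp_neg_mul_le_one (hμ i) (le_max_right t 0)⟩⟩

def diagonalSemigroup (hμ : ∀ i, 0 ≤ (μ i).re) (t : ℝ) : ℓ²(ι, ℂ) →L[ℂ] ℓ²(ι, ℂ) :=
  mulCLM (expMultiplier hμ t)

variable (hμ : ∀ i, 0 ≤ (μ i).re)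

theorem diagonalSemigroup_apply' (t : ℝ) (x : ℓ²(ι, ℂ)) (i : ι) :
    diagonalSemigroup hμ t x i = Complex.exp (-μ i * (max t 0 : ℝ)) * x i := rfl

theorem diagonalSemigroup_apply {t : ℝ} (ht : 0 ≤ t) (x : ℓ²(ι, ℂ)) (i : ι) :
    diagonalSemigroup hμ t x i = Complex.exp (-μ i * t) * x i := by
  rw [diagonalSemigroup_apply', max_eq_left ht]

theorem continuous_diagonalSemigroup_apply (x : ℓ²(ι, ℂ)) :
    Continuous fun t => diagonalSemigroup hμ t x := by
  refine continuous_iff_continuousAt.2 fun t₀ => ?_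
  refine tendsto_of_dominated ENNReal.ofNat_ne_top ((lp.memℓp x).norm.const_mul 2)
    (Eventually.of_forall fun t i => ?_) fun i => ?_
  · simp only [diagonalSemigroup_apply', ← sub_mul, norm_mul]
    gcongr
    refine (norm_sub_le _ _).trans ?_
    linarith [Complex.norm_exp_neg_mul_le_one (hμ i) (le_max_right t 0),
      Complex.norm_exp_neg_mul_le_one (hμ i) (le_max_right t₀ 0)]
  · simp only [diagonalSemigroup_apply']
    exact Continuous.tendsto (by fun_prop) t₀

theorem isC0Semigroup_diagonalSemigroup : IsC0Semigroup (diagonalSemigroup hμ) where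
  map_zero := by
    ext x i
    simp [diagonalSemigroup_apply hμ le_rfl]
  map_add s t hs ht := by
    ext x i
    simp only [ContinuousLinearMap.comp_apply, diagonalSemigroup_apply hμ (add_nonneg hs ht),
      diagonalSemigroup_apply hμ hs, diagonalSemigroup_apply hμ ht, ← mul_assoc,
      ← Complex.exp_add]
    push_cast
    ring_nf
  strong_continuity x := (continuous_diagonalSemigroup_apply hμ x).continuousOn

theorem norm_diagonalSemigroup_le {c : ℝ} (hc : ∀ i, c ≤ (μ i).re) {t : ℝ} (ht : 0 ≤ t) :
    ‖diagonalSemigroup hμ t‖ ≤ Real.exp (-(c * t)) := by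
  rw [diagonalSemigroup, norm_mulCLM]
  refine norm_le_of_forall_le (Real.exp_nonneg _) fun i => ?_
  simp only [expMultiplier, max_eq_left ht, Complex.norm_exp]
  gcongr
  simpa [Complex.mul_re] using mul_le_mul_of_nonneg_right (hc i) ht

theorem isExpStable_diagonalSemigroup {c : ℝ} (hc₀ : 0 < c) (hc : ∀ i, c ≤ (μ i).re) :
    IsExpStable (diagonalSemigroup hμ) :=
  ⟨1, c, one_pos, hc₀, fun _ ht => by simpa using norm_diagonalSemigroup_le hμ hc ht⟩

theorem slope_diagonalSemigroup_apply {h : ℝ} (hh : 0 ≤ h) (x : ℓ²(ι, ℂ)) (i : ι) :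
    ((h : ℂ)⁻¹ • (diagonalSemigroup hμ h x - x)) i =
      (h : ℂ)⁻¹ * (Complex.exp (-μ i * h) - 1) * x i := by
  rw [coeFn_smul, Pi.smul_apply, coeFn_sub, Pi.sub_apply, diagonalSemigroup_apply hμ hh,
    smul_eq_mul]
  ring

theorem tendsto_slope_diagonalSemigroup_apply (x : ℓ²(ι, ℂ)) (i : ι) :
    Tendsto (fun h : ℝ => ((h : ℂ)⁻¹ • (diagonalSemigroup hμ h x - x)) i) (𝓝[>] 0)
      (𝓝 (-(μ i * x i))) := by
  rw [← neg_mul]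
  refine ((Complex.tendsto_slope_exp_neg_mul (μ i)).mul_const (x i)).congr' ?_
  filter_upwards [self_mem_nhdsWithin] with h hh
  rw [slope_diagonalSemigroup_apply hμ (le_of_lt hh)]

theorem tendsto_slope_diagonalSemigroup {x : ℓ²(ι, ℂ)} (hx : x ∈ (diagonal μ).domain) :
    Tendsto (fun h : ℝ => (h : ℂ)⁻¹ • (diagonalSemigroup hμ h x - x)) (𝓝[>] 0)
      (𝓝 (-(diagonal μ ⟨x, hx⟩))) := by
  refine tendsto_of_dominated ENNReal.ofNat_ne_top (hx.norm.const_mul 2) ?_ fun i => ?_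
  · filter_upwards [self_mem_nhdsWithin] with h hh i
    have hslope := Complex.norm_slope_exp_neg_mul_le (hμ i) hh
    rw [slope_diagonalSemigroup_apply hμ (le_of_lt hh), coeFn_neg, Pi.neg_apply, diagonal_apply,
      sub_neg_eq_add, ← add_mul, norm_mul]
    calc _ ≤ (‖μ i‖ + ‖μ i‖) * ‖x i‖ := by gcongr; exact (norm_add_le _ _).trans (by gcongr)
      _ = 2 * ‖μ i * x i‖ := by rw [norm_mul]; ring
  · simpa using tendsto_slope_diagonalSemigroup_apply hμ x i

theorem isGenerator_diagonalSemigroup :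
    IsGenerator (diagonalSemigroup hμ) (diagonal μ) := by
  refine ⟨fun x => ⟨fun hx => ⟨_, tendsto_slope_diagonalSemigroup hμ hx⟩, fun ⟨y, hy⟩ => ?_⟩,
    fun x => tendsto_slope_diagonalSemigroup hμ x.2⟩
  have hy_apply (i : ι) : y i = -(μ i * x i) :=
    tendsto_nhds_unique (((lipschitzWith_one_eval 2 i).continuous.tendsto y).comp hy)
      (tendsto_slope_diagonalSemigroup_apply hμ x i)
  have hμx : (fun i => μ i * x i) = -⇑y := funext fun i => by simp [hy_apply]
  rw [mem_diagonal_domain, hμx]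
  exact (lp.memℓp y).neg

-- The operator `A e^{-tA}` for `A = diagonal μ`, whenever its multiplier is bounded.
open scoped Classical in
def diagonalCompSemigroup (μ : ι → ℂ) (t : ℝ) : ℓ²(ι, ℂ) →L[ℂ] ℓ²(ι, ℂ) :=
  if h : Memℓp (fun i => μ i * Complex.exp (-μ i * t)) ∞ then mulCLM ⟨_, h⟩ else 0

variable {t : ℝ}

theorem diagonalCompSemigroup_apply (hb : Memℓp (fun i => μ i * Complex.exp (-μ i * t)) ∞)
    (x : ℓ²(ι, ℂ)) (i : ι) :
    diagonalCompSemigroup μ t x i = μ i * Complex.exp (-μ i * t) * x i := by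
  rw [diagonalCompSemigroup, dif_pos hb]
  rfl

theorem norm_diagonalCompSemigroup (hb : Memℓp (fun i => μ i * Complex.exp (-μ i * t)) ∞) :
    ‖diagonalCompSemigroup μ t‖ = ‖(⟨_, hb⟩ : ℓ^∞(ι, ℂ))‖ := by
  rw [diagonalCompSemigroup, dif_pos hb, norm_mulCLM]

theorem exists_mem_domain_diagonalCompSemigroup
    (hb : Memℓp (fun i => μ i * Complex.exp (-μ i * t)) ∞) (ht : 0 ≤ t) (x : ℓ²(ι, ℂ)) :
    ∃ hx : diagonalSemigroup hμ t x ∈ (diagonal μ).domain,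
      diagonalCompSemigroup μ t x = diagonal μ ⟨_, hx⟩ := by
  have hx : diagonalSemigroup hμ t x ∈ (diagonal μ).domain := by
    rw [mem_diagonal_domain]
    convert memℓp_infty_mul ⟨_, hb⟩ x using 2 with i
    rw [diagonalSemigroup_apply hμ ht, ← mul_assoc]
  refine ⟨hx, lp.ext (funext fun i => ?_)⟩
  rw [diagonalCompSemigroup_apply hb, diagonal_apply, diagonalSemigroup_apply hμ ht, mul_assoc]

end Semigroup

end lp

section CrandallPazy

variable {T : ℝ → H →L[ℂ] H} {A : H →ₗ.[ℂ] H} {B : ℝ → H →L[ℂ] H}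

theorem inCrandallPazy_one_div {γ M : ℝ} (hM : 0 < M)
    (hB : ∀ t, 0 < t → ∀ x, ∃ hx : T t x ∈ A.domain, B t x = A ⟨T t x, hx⟩)
    (hBM : ∀ t, 0 < t → ‖B t‖ ≤ M * t ^ (-γ)) : InCrandallPazy T A (1 / γ) :=
  ⟨B, hB, M, 1, hM, one_pos, fun t ht _ => by simpa only [one_div_one_div] using hBM t ht⟩

theorem not_inCrandallPazy_of_limsup_pos {γ β : ℝ} (hγ : 0 < γ) (hβ : 1 / γ < β)
    (hB : ∀ t, 0 < t → ∀ x, ∃ hx : T t x ∈ A.domain, B t x = A ⟨T t x, hx⟩)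
    (hlim : 0 < limsup (fun t => t ^ γ * ‖B t‖) (𝓝[>] 0)) : ¬ InCrandallPazy T A β := by
  rintro ⟨B', hB', M, t₀, -, ht₀, hM⟩
  have hβ₀ : 0 < β := (one_div_pos.2 hγ).trans hβ
  have hexp : 0 < γ - 1 / β := sub_pos.2 ((one_div_lt hγ hβ₀).1 hβ)
  have hB'B (t : ℝ) (ht : 0 < t) : B' t = B t := ContinuousLinearMap.ext fun x => by
    obtain ⟨_, hx⟩ := hB t ht x
    obtain ⟨_, hx'⟩ := hB' t ht x
    rw [hx, hx']
  have hle : ∀ᶠ t in 𝓝[>] 0, t ^ γ * ‖B t‖ ≤ M * t ^ (γ - 1 / β) := by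
    filter_upwards [Ioc_mem_nhdsGT ht₀] with t ht
    calc t ^ γ * ‖B t‖ ≤ t ^ γ * (M * t ^ (-(1 / β))) := by
          rw [← hB'B t ht.1]
          exact mul_le_mul_of_nonneg_left (hM t ht.1 ht.2) (Real.rpow_nonneg ht.1.le γ)
      _ = M * t ^ (γ - 1 / β) := by
          rw [sub_eq_add_neg, Real.rpow_add ht.1]
          ring
  have hzero : Tendsto (fun t : ℝ => M * t ^ (γ - 1 / β)) (𝓝[>] 0) (𝓝 0) := by
    have h := ((Real.continuousAt_rpow_const 0 _ (Or.inr hexp.le)).tendsto.mono_left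
      (nhdsWithin_le_nhds (s := Set.Ioi 0))).const_mul M
    rwa [Real.zero_rpow hexp.ne', mul_zero] at h
  have hnonneg : ∀ᶠ t in 𝓝[>] (0 : ℝ), 0 ≤ t ^ γ * ‖B t‖ := by
    filter_upwards [self_mem_nhdsWithin] with t ht
    exact mul_nonneg (Real.rpow_nonneg (le_of_lt ht) γ) (norm_nonneg _)
  rw [(squeeze_zero' hnonneg hle hzero).limsup_eq] at hlim
  exact lt_irrefl 0 hlim

end CrandallPazy

section Example

variable {γ : ℝ}

theorem lamE_re (γ : ℝ) (j : ℕ) : (lamE γ j).re = j + 2 := by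
  simp [lamE]
  ring

theorem lamE_im (γ : ℝ) (j : ℕ) : (lamE γ j).im = ((j : ℝ) + 1) ^ γ := by
  simp [lamE]

theorem norm_lamE_le (hγ : 1 ≤ γ) (j : ℕ) : ‖lamE γ j‖ ≤ √5 * ((j : ℝ) + 1) ^ γ := by
  have hj : (1 : ℝ) ≤ j + 1 := by linarith [j.cast_nonneg (α := ℝ)]
  have hjγ : (j : ℝ) + 1 ≤ ((j : ℝ) + 1) ^ γ := by
    simpa using Real.rpow_le_rpow_of_exponent_le hj hγ
  rw [← Real.sqrt_sq (by positivity : 0 ≤ ((j : ℝ) + 1) ^ γ), ← Real.sqrt_mul (by norm_num),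
    Complex.norm_eq_sqrt_sq_add_sq, lamE_re, lamE_im]
  gcongr
  nlinarith

theorem rpow_le_norm_lamE (γ : ℝ) (j : ℕ) : ((j : ℝ) + 1) ^ γ ≤ ‖lamE γ j‖ := by
  simpa [lamE_im, abs_of_nonneg (Real.rpow_nonneg (by positivity : (0 : ℝ) ≤ j + 1) γ)] using
    Complex.abs_im_le_norm (lamE γ j)

theorem norm_exp_neg_lamE_mul (γ : ℝ) (j : ℕ) (t : ℝ) :
    ‖Complex.exp (-lamE γ j * t)‖ = Real.exp (-((j + 2) * t)) := by
  simp [Complex.norm_exp, Complex.mul_re, lamE_re]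

theorem norm_lamE_mul_exp_le (hγ : 1 ≤ γ) {t : ℝ} (ht : 0 < t) (j : ℕ) :
    ‖lamE γ j * Complex.exp (-lamE γ j * t)‖ ≤ √5 * (γ / (Real.exp 1 * t)) ^ γ := by
  rw [norm_mul, norm_exp_neg_lamE_mul]
  calc ‖lamE γ j‖ * Real.exp (-((j + 2) * t))
      ≤ √5 * ((j : ℝ) + 1) ^ γ * Real.exp (-((j + 1) * t)) := by
        gcongr
        · exact norm_lamE_le hγ j
        · linarith
    _ ≤ √5 * (γ / (Real.exp 1 * t)) ^ γ := by
        rw [mul_assoc]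
        gcongr
        exact Real.rpow_mul_exp_neg_mul_le (by positivity) ht (by linarith)

theorem memℓp_lamE_mul_exp (hγ : 1 ≤ γ) {t : ℝ} (ht : 0 < t) :
    Memℓp (fun j => lamE γ j * Complex.exp (-lamE γ j * t)) ∞ :=
  memℓp_infty ⟨_, Set.forall_mem_range.2 (norm_lamE_mul_exp_le hγ ht)⟩

theorem norm_diagonalCompSemigroup_lamE_le (hγ : 1 ≤ γ) {t : ℝ} (ht : 0 < t) :
    ‖lp.diagonalCompSemigroup (lamE γ) t‖ ≤ √5 * (γ / (Real.exp 1 * t)) ^ γ := by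
  rw [lp.norm_diagonalCompSemigroup (memℓp_lamE_mul_exp hγ ht)]
  exact lp.norm_le_of_forall_le (by positivity) (norm_lamE_mul_exp_le hγ ht)

theorem norm_diagonalCompSemigroup_lamE_le_mul_rpow_neg (hγ : 1 ≤ γ) {t : ℝ} (ht : 0 < t) :
    ‖lp.diagonalCompSemigroup (lamE γ) t‖ ≤ √5 * (γ / Real.exp 1) ^ γ * t ^ (-γ) := by
  convert norm_diagonalCompSemigroup_lamE_le hγ ht using 1
  rw [← div_div, Real.div_rpow (div_pos (by linarith) (Real.exp_pos 1)).le ht.le,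
    Real.rpow_neg ht.le]
  ring

theorem exp_neg_one_add_inv_le (hγ : 1 ≤ γ) (j : ℕ) :
    Real.exp (-(1 + ((j : ℝ) + 1)⁻¹)) ≤
      ((j : ℝ) + 1)⁻¹ ^ γ * ‖lp.diagonalCompSemigroup (lamE γ) ((j : ℝ) + 1)⁻¹‖ := by
  set t := ((j : ℝ) + 1)⁻¹
  have ht : 0 < t := by positivity
  have hb := memℓp_lamE_mul_exp hγ ht
  have htj : t * ((j : ℝ) + 1) = 1 := inv_mul_cancel₀ (by positivity)
  calc Real.exp (-(1 + t)) = t ^ γ * (((j : ℝ) + 1) ^ γ * Real.exp (-((j + 2) * t))) := by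
        rw [← mul_assoc, ← Real.mul_rpow ht.le (by positivity), htj, Real.one_rpow, one_mul]
        congr 2
        linarith
    _ ≤ t ^ γ * ‖lp.diagonalCompSemigroup (lamE γ) t‖ := by
        gcongr
        calc ((j : ℝ) + 1) ^ γ * Real.exp (-((j + 2) * t))
            ≤ ‖lamE γ j * Complex.exp (-lamE γ j * t)‖ := by
              rw [norm_mul, norm_exp_neg_lamE_mul]
              gcongr
              exact rpow_le_norm_lamE γ j
          _ ≤ ‖lp.diagonalCompSemigroup (lamE γ) t‖ := by
              rw [lp.norm_diagonalCompSemigroup hb]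
              exact lp.norm_apply_le_norm ENNReal.top_ne_zero ⟨_, hb⟩ j

theorem exp_neg_one_le_limsup (hγ : 1 ≤ γ) :
    Real.exp (-1) ≤
      limsup (fun t : ℝ => t ^ γ * ‖lp.diagonalCompSemigroup (lamE γ) t‖) (𝓝[>] 0) := by
  have hbdd : IsBoundedUnder (· ≤ ·) (𝓝[>] 0)
      (fun t : ℝ => t ^ γ * ‖lp.diagonalCompSemigroup (lamE γ) t‖) := by
    refine isBoundedUnder_of_eventually_le (a := √5 * (γ / Real.exp 1) ^ γ) ?_
    filter_upwards [self_mem_nhdsWithin] with t (ht : 0 < t)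
    calc t ^ γ * ‖lp.diagonalCompSemigroup (lamE γ) t‖
        ≤ t ^ γ * (√5 * (γ / Real.exp 1) ^ γ * t ^ (-γ)) := by
          gcongr
          exact norm_diagonalCompSemigroup_lamE_le_mul_rpow_neg hγ ht
      _ = √5 * (γ / Real.exp 1) ^ γ := by
          rw [Real.rpow_neg ht.le]
          field_simp
  have hseq : Tendsto (fun j : ℕ => ((j : ℝ) + 1)⁻¹) atTop (𝓝[>] 0) :=
    tendsto_nhdsWithin_iff.2 ⟨by simpa using tendsto_one_div_add_atTop_nhds_zero_nat (𝕜 := ℝ),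
      Eventually.of_forall fun j => Set.mem_Ioi.2 (by positivity)⟩
  have hexp : Tendsto (fun j : ℕ => Real.exp (-(1 + ((j : ℝ) + 1)⁻¹))) atTop
      (𝓝 (Real.exp (-1))) := by
    simpa using ((hseq.mono_right nhdsWithin_le_nhds).const_add 1).neg.rexp
  refine forall_lt_imp_le_iff_le_of_dense.1 fun b hb => le_limsup_of_frequently_le ?_ hbdd
  exact hseq.frequently ((hexp.eventually (lt_mem_nhds hb)).mono fun j hj =>
    hj.le.trans (exp_neg_one_add_inv_le hγ j)).frequently

end Example

/-- The Example of Section 3.4: for `γ ≥ 1`, the diagonal operator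
`(A x)_k = (k + i k^γ + 1) x_k` on `ℓ²` (with maximal domain) is such that `-A` generates
the exponentially stable `C₀`-semigroup `(e^{-tA} x)_k = e^{-(k + i k^γ + 1)t} x_k`;
moreover `e^{-tA} ℓ² ⊆ D(A)` for every `t > 0` with
`‖A e^{-tA}‖ ≤ √5 (γ/(e t))^γ`, while `limsup_{t→0+} t^γ ‖A e^{-tA}‖ ≥ e⁻¹`; consequently
the semigroup is in the Crandall–Pazy class with parameter `β = 1/γ` but not with any
larger parameter. -/
theorem diagonal_example (γ : ℝ) (hγ : 1 ≤ γ) :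
    ∃ (A : H2 →ₗ.[ℂ] H2) (T : ℝ → H2 →L[ℂ] H2),
      IsC0Semigroup T ∧ IsGenerator T A ∧
      ((A.domain : Set H2) = {x : H2 | Memℓp (fun j : ℕ => lamE γ j * x j) 2}) ∧
      (∀ x : A.domain, ∀ j : ℕ, (A x) j = lamE γ j * (x : H2) j) ∧
      (∀ t : ℝ, 0 ≤ t → ∀ x : H2, ∀ j : ℕ,
        (T t x) j = Complex.exp (-(lamE γ j) * (t : ℂ)) * x j) ∧
      IsExpStable T ∧
      ∃ B : ℝ → H2 →L[ℂ] H2,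
        (∀ t : ℝ, 0 < t → ∀ x : H2, ∃ hx : T t x ∈ A.domain, B t x = A ⟨T t x, hx⟩) ∧
        (∀ t : ℝ, 0 < t → ‖B t‖ ≤ Real.sqrt 5 * (γ / (Real.exp 1 * t)) ^ γ) ∧
        Real.exp (-1) ≤ Filter.limsup (fun t : ℝ => t ^ γ * ‖B t‖) (𝓝[>] (0 : ℝ)) ∧
        InCrandallPazy T A (1 / γ) ∧
        ∀ β' : ℝ, 1 / γ < β' → ¬ InCrandallPazy T A β' := by
  have hμ (j : ℕ) : 0 ≤ (lamE γ j).re := by rw [lamE_re]; positivity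
  have hB (t : ℝ) (ht : 0 < t) (x : H2) :=
    lp.exists_mem_domain_diagonalCompSemigroup hμ (memℓp_lamE_mul_exp hγ ht) ht.le x
  refine ⟨lp.diagonal (lamE γ), lp.diagonalSemigroup hμ, lp.isC0Semigroup_diagonalSemigroup hμ,
    lp.isGenerator_diagonalSemigroup hμ, rfl, fun _ _ => rfl,
    fun t ht => lp.diagonalSemigroup_apply hμ ht,
    lp.isExpStable_diagonalSemigroup hμ one_pos fun j => by rw [lamE_re]; linarith,
    lp.diagonalCompSemigroup (lamE γ), hB, fun t ht => norm_diagonalCompSemigroup_lamE_le hγ ht,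
    exp_neg_one_le_limsup hγ, ?_, fun β hβ => ?_⟩
  · exact inCrandallPazy_one_div (by positivity) hB
      fun t ht => norm_diagonalCompSemigroup_lamE_le_mul_rpow_neg hγ ht
  · exact not_inCrandallPazy_of_limsup_pos (by linarith) hβ hB
      ((Real.exp_pos (-1)).trans_le (exp_neg_one_le_limsup hγ))

end
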